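/- arXiv:1804.01499 — 2 statements merged into one kernel-verified Lean document; each statement's English description precedes it below -/
import Mathlib

section
/- Let X be a compact Hausdorff space, E a Banach space over 𝕂 ∈ {ℝ, ℂ}, and A a 𝕂-linear subspace of C(X,E). Then for every nonempty convex subset C of S(A) there exist a point x ∈ X and a maximal convex subset K of S(E) such that C ⊆ V^A_{x,K}. -/
open Set Metric

variable {𝕂 : Type*} [RCLike 𝕂]
variable {X : Type*} [TopologicalSpace X] [CompactSpace X] [T2Space X]
variable {E : Type*} [NormedAddCommGroup E] [NormedSpace ℝ E] [NormedSpace 𝕂 E]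
  [IsScalarTower ℝ 𝕂 E] [CompleteSpace E]

/-- `C` is a maximal convex subset of `S` (convexity over `ℝ`). -/
def MaxConvexIn {M : Type*} [AddCommGroup M] [Module ℝ M] (S C : Set M) : Prop :=
  C ⊆ S ∧ Convex ℝ C ∧ ∀ C' : Set M, C' ⊆ S → Convex ℝ C' → C ⊆ C' → C' = C

/-- The unit sphere `S(A)` of the subspace `A` of `C(X,E)`. -/
def unitSphereOf (A : Subspace 𝕂 C(X, E)) : Set C(X, E) :=
  {f | f ∈ A ∧ ‖f‖ = 1}

/-- The set `V^A_{x,K} = {f ∈ S(A) : f(x) ∈ K}`. -/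
def Vset (A : Subspace 𝕂 C(X, E)) (x : X) (K : Set E) : Set C(X, E) :=
  {f | f ∈ A ∧ ‖f‖ = 1 ∧ f x ∈ K}

/-!
All functions of a convex set `C ⊆ S(A)` attain their norm at one common point `x`: by
compactness it suffices to find such a point for finitely many `f₁, …, fₙ ∈ C`, and any point
where their average (again in `C`, so of norm one) peaks will do, since a convex combination of
vectors of the closed unit ball has norm one only if all of them have norm one. The values `f x`,
`f ∈ C`, then form a convex subset of `S(E)`, which Zorn's lemma enlarges to a maximal one.
-/

theorem norm_eq_one_of_norm_sum_smul_eq_one {ι F : Type*} [SeminormedAddCommGroup F]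
    [NormedSpace ℝ F] {t : Finset ι} {w : ι → ℝ} {v : ι → F} (hw : ∀ i ∈ t, 0 < w i)
    (hw₁ : ∑ i ∈ t, w i = 1) (hv : ∀ i ∈ t, ‖v i‖ ≤ 1) (h : ‖∑ i ∈ t, w i • v i‖ = 1) :
    ∀ i ∈ t, ‖v i‖ = 1 := by
  have hdefect : ∑ i ∈ t, w i * (1 - ‖v i‖) = 0 := by
    have hle : ∑ i ∈ t, w i * ‖v i‖ ≤ 1 :=
      calc ∑ i ∈ t, w i * ‖v i‖ ≤ ∑ i ∈ t, w i :=
            Finset.sum_le_sum fun i hi => mul_le_of_le_one_right (hw i hi).le (hv i hi)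
        _ = 1 := hw₁
    have hge : 1 ≤ ∑ i ∈ t, w i * ‖v i‖ :=
      calc (1 : ℝ) = ‖∑ i ∈ t, w i • v i‖ := h.symm
        _ ≤ ∑ i ∈ t, ‖w i • v i‖ := norm_sum_le _ _
        _ = ∑ i ∈ t, w i * ‖v i‖ := Finset.sum_congr rfl fun i hi => by
            rw [norm_smul, Real.norm_of_nonneg (hw i hi).le]
    simp only [mul_sub, mul_one, Finset.sum_sub_distrib, hw₁]
    linarith
  intro i hi
  have hzero := (Finset.sum_eq_zero_iff_of_nonneg fun j hj =>
    mul_nonneg (hw j hj).le (sub_nonneg.2 (hv j hj))).1 hdefect i hi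
  have hvi : 1 - ‖v i‖ = 0 := (mul_eq_zero.1 hzero).resolve_left (hw i hi).ne'
  linarith

theorem ContinuousMap.exists_norm_apply_eq_norm {X E : Type*} [TopologicalSpace X]
    [CompactSpace X] [Nonempty X] [SeminormedAddCommGroup E] (f : C(X, E)) :
    ∃ x, ‖f x‖ = ‖f‖ := by
  obtain ⟨x, -, hx⟩ := isCompact_univ.exists_isMaxOn univ_nonempty f.continuous.norm.continuousOn
  exact ⟨x, le_antisymm (f.norm_coe_le_norm x)
    ((f.norm_le (norm_nonneg _)).2 fun y => hx (mem_univ y))⟩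

theorem ContinuousMap.exists_forall_norm_apply_eq_one_of_convex {X E : Type*}
    [TopologicalSpace X] [CompactSpace X] [SeminormedAddCommGroup E] [NormedSpace ℝ E]
    {C : Set C(X, E)} (hne : C.Nonempty) (hconv : Convex ℝ C) (hnorm : ∀ f ∈ C, ‖f‖ = 1) :
    ∃ x, ∀ f ∈ C, ‖f x‖ = 1 := by
  obtain ⟨f₀, hf₀⟩ := hne
  have : Nonempty X := by
    by_contra hX
    rw [not_nonempty_iff] at hX
    have hf₀_zero : f₀ = 0 := ContinuousMap.ext isEmptyElim
    simpa [hf₀_zero] using hnorm f₀ hf₀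
  suffices hfin : ∀ s : Finset C, ∃ x, ∀ f ∈ s, ‖(f : C(X, E)) x‖ = 1 by
    obtain ⟨x, hx⟩ := CompactSpace.iInter_nonempty (t := fun f : C => {x | ‖(f : C(X, E)) x‖ = 1})
      (fun f => isClosed_eq (f : C(X, E)).continuous.norm continuous_const)
      fun s => by simpa only [nonempty_iInter, mem_iInter, mem_ofPred_eq] using hfin s
    exact ⟨x, fun f hf => mem_iInter.1 hx ⟨f, hf⟩⟩
  intro s
  classical
  let t := insert ⟨f₀, hf₀⟩ s
  let w : C → ℝ := fun _ => (t.card : ℝ)⁻¹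
  have hcard : (0 : ℝ) < t.card := Nat.cast_pos.2 (Finset.insert_nonempty _ _).card_pos
  have hw₁ : ∑ f ∈ t, w f = 1 := by simp [w, hcard.ne']
  let g := ∑ f ∈ t, w f • (f : C(X, E))
  have hg : g ∈ C := hconv.sum_mem (fun _ _ => by positivity) hw₁ fun f _ => f.2
  obtain ⟨x, hx⟩ := g.exists_norm_apply_eq_norm
  have hgx : ‖∑ f ∈ t, w f • (f : C(X, E)) x‖ = 1 := by
    simpa [g, hnorm g hg] using hx
  have ht := norm_eq_one_of_norm_sum_smul_eq_one (fun _ _ => inv_pos.2 hcard) hw₁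
    (fun f _ => ((f : C(X, E)).norm_coe_le_norm x).trans (hnorm f f.2).le) hgx
  exact ⟨x, fun f hf => ht f (Finset.mem_insert_of_mem hf)⟩

theorem exists_maxConvexIn_superset {M : Type*} [AddCommGroup M] [Module ℝ M] {S D : Set M}
    (hDS : D ⊆ S) (hD : Convex ℝ D) : ∃ K, D ⊆ K ∧ MaxConvexIn S K := by
  obtain ⟨K, hDK, hK⟩ := zorn_subset_nonempty {K | K ⊆ S ∧ Convex ℝ K}
    (fun c hc hchain _ => ⟨⋃₀ c,
      ⟨sUnion_subset fun _ hu => (hc hu).1, hchain.directedOn.convex_sUnion fun _ hu => (hc hu).2⟩,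
      fun _ => subset_sUnion_of_mem⟩)
    D ⟨hDS, hD⟩
  exact ⟨K, hDK, hK.prop.1, hK.prop.2,
    fun K' hK'S hK' hKK' => hK.eq_of_superset ⟨hK'S, hK'⟩ hKK'⟩

/-- Every nonempty convex subset `C` of `S(A)` is contained in some `V^A_{x,K}`
with `K` a maximal convex subset of `S(E)`. -/
theorem stmt0 (A : Subspace 𝕂 C(X, E)) (C : Set C(X, E))
    (hne : C.Nonempty) (hconv : Convex ℝ C) (hsub : C ⊆ unitSphereOf A) :
    ∃ (x : X) (K : Set E),
      MaxConvexIn (sphere (0 : E) 1) K ∧ C ⊆ Vset A x K := by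
  obtain ⟨x, hx⟩ :=
    ContinuousMap.exists_forall_norm_apply_eq_one_of_convex hne hconv fun f hf => (hsub hf).2
  have hvalues : (fun f : C(X, E) => f x) '' C ⊆ sphere 0 1 :=
    image_subset_iff.2 fun f hf => mem_sphere_zero_iff_norm.2 (hx f hf)
  obtain ⟨K, hCK, hK⟩ :=
    exists_maxConvexIn_superset hvalues (hconv.linear_image (ContinuousMap.evalCLM ℝ x).toLinearMap)
  exact ⟨x, K, hK, fun f hf => ⟨(hsub hf).1, (hsub hf).2, hCK (mem_image_of_mem _ hf)⟩⟩
end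

section
/- Let X be a compact Hausdorff space, E a Banach space over 𝕂 ∈ {ℝ, ℂ}, and A a 𝕂-linear subspace of C(X,E) that contains all constant functions c_u (u ∈ E). Then η₂(A) ⊆ η₁(A). -/
open Set Metric

variable {𝕂 : Type*} [RCLike 𝕂]
variable {X : Type*} [TopologicalSpace X] [CompactSpace X] [T2Space X]
variable {E : Type*} [NormedAddCommGroup E] [NormedSpace ℝ E] [NormedSpace 𝕂 E]
  [IsScalarTower ℝ 𝕂 E] [CompleteSpace E]

/-- `η₁(A)`: points of type one for `A`. -/
def typeOnePoints (A : Subspace 𝕂 C(X, E)) : Set X :=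
  {x | ∀ K : Set E, MaxConvexIn (sphere (0 : E) 1) K →
    MaxConvexIn (unitSphereOf A) (Vset A x K)}

/-- `η₂(A)`: points of type two for `A`. -/
def typeTwoPoints (A : Subspace 𝕂 C(X, E)) : Set X :=
  {x | ∀ K K' : Set E, MaxConvexIn (sphere (0 : E) 1) K →
    MaxConvexIn (sphere (0 : E) 1) K' →
    ∀ y : X, Vset A x K ⊆ Vset A y K' → x = y}

/-- Any convex subset of `S` extends to a maximal convex subset of `S`. -/
lemma exists_maxConvexIn {M : Type*} [AddCommGroup M] [Module ℝ M]
    (S D : Set M) (hDS : D ⊆ S) (hD : Convex ℝ D) :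
    ∃ K, MaxConvexIn S K ∧ D ⊆ K := by
  obtain ⟨K, hDK, hK, hmax⟩ := zorn_subset_nonempty {C : Set M | C ⊆ S ∧ Convex ℝ C}
    (fun c hc hchain hne => by
      refine ⟨⋃₀ c, ⟨?_, ?_⟩, fun s hs => subset_sUnion_of_mem hs⟩
      · exact sUnion_subset fun s hs => (hc hs).1
      · intro u hu v hv a b ha hb hab
        obtain ⟨s, hs, hus⟩ := hu
        obtain ⟨t, ht, hvt⟩ := hv
        rcases hchain.total hs ht with h | h
        · exact subset_sUnion_of_mem ht ((hc ht).2 (h hus) hvt ha hb hab)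
        · exact subset_sUnion_of_mem hs ((hc hs).2 hus (h hvt) ha hb hab))
    D ⟨hDS, hD⟩
  refine ⟨K, ⟨hK.1, hK.2, fun C' hC'S hC' hKC' =>
    subset_antisymm (hmax ⟨hC'S, hC'⟩ hKC') hKC'⟩, hDK⟩

/-- On a nonempty compact space, the norm of a continuous map is attained. -/
lemma exists_norm_apply_eq {X E : Type*} [TopologicalSpace X] [CompactSpace X] [Nonempty X]
    [NormedAddCommGroup E] (f : C(X, E)) : ∃ y, ‖f y‖ = ‖f‖ := by
  obtain ⟨y, -, hy⟩ := isCompact_univ.exists_isMaxOn univ_nonempty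
    ((continuous_norm.comp f.continuous).continuousOn : ContinuousOn (fun z => ‖f z‖) univ)
  refine ⟨y, le_antisymm (f.norm_coe_le_norm y) ?_⟩
  exact (f.norm_le (norm_nonneg _)).mpr fun z => hy (mem_univ z)

lemma norm_const_cm {X E : Type*} [TopologicalSpace X] [CompactSpace X] [Nonempty X]
    [NormedAddCommGroup E] (v : E) : ‖ContinuousMap.const X v‖ = ‖v‖ := by
  refine le_antisymm ((ContinuousMap.norm_le _ (norm_nonneg _)).mpr fun z => le_refl _) ?_
  exact (ContinuousMap.const X v).norm_coe_le_norm (Classical.arbitrary X)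

/-- For a convex set of norm-one continuous functions on a nonempty compact space,
there is a common point where all pairs are "aligned". -/
lemma exists_aligned_point {X E : Type*} [TopologicalSpace X] [CompactSpace X] [Nonempty X]
    [NormedAddCommGroup E] [NormedSpace ℝ E]
    (C : Set C(X, E)) (hCn : ∀ f ∈ C, ‖f‖ = 1) (hC : Convex ℝ C) :
    ∃ y : X, ∀ f ∈ C, ∀ g ∈ C, ‖f y + g y‖ = 2 := by
  classical
  set t : C(X, E) × C(X, E) → Set X :=
    fun p => {y | p.1 ∈ C → p.2 ∈ C → ‖p.1 y + p.2 y‖ = 2} with ht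
  have hclosed : ∀ p, IsClosed (t p) := by
    intro p
    by_cases hp : p.1 ∈ C ∧ p.2 ∈ C
    · have : t p = (fun y => ‖p.1 y + p.2 y‖) ⁻¹' {2} := by
        ext y; simp [ht, hp.1, hp.2]
      rw [this]
      exact IsClosed.preimage (by continuity) isClosed_singleton
    · have : t p = univ := by
        ext y; simp only [ht, mem_setOf_eq, mem_univ, iff_true]
        intro h1 h2; exact absurd ⟨h1, h2⟩ hp
      rw [this]; exact isClosed_univ
  have hfin : ∀ u : Finset (C(X, E) × C(X, E)), (univ ∩ ⋂ p ∈ u, t p).Nonempty := by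
    intro u
    set T : Finset C(X, E) :=
      (u.image Prod.fst ∪ u.image Prod.snd).filter (· ∈ C) with hT
    have hTC : ∀ f ∈ T, f ∈ C := fun f hf => (Finset.mem_filter.mp hf).2
    by_cases hTne : T.Nonempty
    · set n : ℕ := T.card with hn
      have hnpos : 0 < n := Finset.card_pos.mpr hTne
      have hnR : (0 : ℝ) < (n : ℝ) := by exact_mod_cast hnpos
      have hg : (∑ h ∈ T, ((n : ℝ)⁻¹) • h) ∈ C := by
        refine hC.sum_mem (fun i _ => by positivity) ?_ (fun i hi => hTC i hi)
        rw [Finset.sum_const, nsmul_eq_mul, mul_inv_cancel₀ (ne_of_gt hnR)]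
      obtain ⟨y, hy⟩ := exists_norm_apply_eq (∑ h ∈ T, ((n : ℝ)⁻¹) • h)
      rw [hCn _ hg] at hy
      have hsumy : ‖∑ h ∈ T, h y‖ = (n : ℝ) := by
        have h1 : (∑ h ∈ T, ((n : ℝ)⁻¹) • h) y = ((n : ℝ)⁻¹) • ∑ h ∈ T, h y := by
          rw [ContinuousMap.sum_apply, Finset.smul_sum]
          simp
        rw [h1, norm_smul, Real.norm_eq_abs, abs_of_pos (by positivity)] at hy
        field_simp at hy
        linarith [hy]
      have hle1 : ∀ h ∈ T, ‖h y‖ ≤ 1 := fun h hh => by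
        calc ‖h y‖ ≤ ‖h‖ := h.norm_coe_le_norm y
        _ = 1 := hCn _ (hTC h hh)
      have hone : ∀ f ∈ T, ‖f y‖ = 1 := by
        intro f hf
        have hsplit : ∑ h ∈ T, h y = f y + ∑ h ∈ T.erase f, h y := by
          rw [add_comm, Finset.sum_erase_add T _ hf]
        have hbound : ‖∑ h ∈ T.erase f, h y‖ ≤ ((T.erase f).card : ℝ) := by
          calc ‖∑ h ∈ T.erase f, h y‖ ≤ ∑ h ∈ T.erase f, ‖h y‖ := norm_sum_le _ _
          _ ≤ ∑ _h ∈ T.erase f, (1 : ℝ) :=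
            Finset.sum_le_sum fun h hh => hle1 h (Finset.mem_of_mem_erase hh)
          _ = ((T.erase f).card : ℝ) := by simp
        have hcard : ((T.erase f).card : ℝ) = (n : ℝ) - 1 := by
          rw [Finset.card_erase_of_mem hf, Nat.cast_sub hnpos]
          norm_num
        have h1 : (n : ℝ) ≤ ‖f y‖ + ((n : ℝ) - 1) := by
          calc (n : ℝ) = ‖∑ h ∈ T, h y‖ := hsumy.symm
          _ ≤ ‖f y‖ + ‖∑ h ∈ T.erase f, h y‖ := by rw [hsplit]; exact norm_add_le _ _
          _ ≤ ‖f y‖ + ((n : ℝ) - 1) := by linarith [hbound, hcard.symm ▸ hbound, hcard]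
        have := hle1 f hf
        linarith
      have hpair : ∀ f ∈ T, ∀ f' ∈ T, ‖f y + f' y‖ = 2 := by
        intro f hf f' hf'
        by_cases hff : f = f'
        · subst hff
          have : ‖f y + f y‖ = 2 * ‖f y‖ := by
            rw [← two_smul ℝ (f y), norm_smul]; simp [Real.norm_eq_abs]
          rw [this, hone f hf]; ring
        · have hf'e : f' ∈ T.erase f := Finset.mem_erase.mpr ⟨fun h => hff h.symm, hf'⟩
          have hsplit : ∑ h ∈ T, h y = (f y + f' y) + ∑ h ∈ (T.erase f).erase f', h y := by
            have e1 : ∑ h ∈ T.erase f, h y + f y = ∑ h ∈ T, h y :=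
              Finset.sum_erase_add T _ hf
            have e2 : ∑ h ∈ (T.erase f).erase f', h y + f' y = ∑ h ∈ T.erase f, h y :=
              Finset.sum_erase_add _ _ hf'e
            rw [← e1, ← e2]; abel
          have hbound : ‖∑ h ∈ (T.erase f).erase f', h y‖ ≤ (((T.erase f).erase f').card : ℝ) := by
            calc ‖∑ h ∈ (T.erase f).erase f', h y‖ ≤ ∑ h ∈ (T.erase f).erase f', ‖h y‖ :=
              norm_sum_le _ _
            _ ≤ ∑ _h ∈ (T.erase f).erase f', (1 : ℝ) := Finset.sum_le_sum fun h hh =>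
              hle1 h (Finset.mem_of_mem_erase (Finset.mem_of_mem_erase hh))
            _ = _ := by simp
          have h2 : 2 ≤ n := by
            have hsub : ({f, f'} : Finset C(X, E)) ⊆ T := by
              intro z hz
              rcases Finset.mem_insert.mp hz with h | h
              · exact h ▸ hf
              · exact (Finset.mem_singleton.mp h) ▸ hf'
            have := Finset.card_le_card hsub
            rwa [Finset.card_insert_of_notMem (by simp [hff]), Finset.card_singleton] at this
          have hcard : (((T.erase f).erase f').card : ℝ) = (n : ℝ) - 2 := by
            rw [Finset.card_erase_of_mem hf'e, Finset.card_erase_of_mem hf,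
              Nat.cast_sub (by omega), Nat.cast_sub (by omega)]
            rw [hn]; ring
          have hge : (2 : ℝ) ≤ ‖f y + f' y‖ := by
            have h1 : (n : ℝ) ≤ ‖f y + f' y‖ + ((n : ℝ) - 2) := by
              calc (n : ℝ) = ‖∑ h ∈ T, h y‖ := hsumy.symm
              _ ≤ ‖f y + f' y‖ + ‖∑ h ∈ (T.erase f).erase f', h y‖ := by
                rw [hsplit]; exact norm_add_le _ _
              _ ≤ ‖f y + f' y‖ + ((n : ℝ) - 2) := by
                have := hbound; rw [hcard] at this; linarith
            linarith
          have hle : ‖f y + f' y‖ ≤ 2 := by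
            calc ‖f y + f' y‖ ≤ ‖f y‖ + ‖f' y‖ := norm_add_le _ _
            _ ≤ 2 := by linarith [hle1 f hf, hle1 f' hf']
          linarith
      refine ⟨y, mem_inter trivial (mem_iInter₂.mpr fun p hp => ?_)⟩
      intro h1 h2
      have hp1 : p.1 ∈ T := Finset.mem_filter.mpr
        ⟨Finset.mem_union_left _ (Finset.mem_image_of_mem _ hp), h1⟩
      have hp2 : p.2 ∈ T := Finset.mem_filter.mpr
        ⟨Finset.mem_union_right _ (Finset.mem_image_of_mem _ hp), h2⟩
      exact hpair _ hp1 _ hp2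
    · refine ⟨Classical.arbitrary X, mem_inter trivial (mem_iInter₂.mpr fun p hp => ?_)⟩
      intro h1 h2
      exact absurd ⟨p.1, Finset.mem_filter.mpr
        ⟨Finset.mem_union_left _ (Finset.mem_image_of_mem _ hp), h1⟩⟩ hTne
  obtain ⟨y, hy⟩ := isCompact_univ.inter_iInter_nonempty t hclosed hfin
  refine ⟨y, fun f hf g hg => ?_⟩
  exact mem_iInter.mp hy.2 (f, g) hf hg

/-- If `A` contains all constant functions, then `η₂(A) ⊆ η₁(A)`. -/
theorem stmt3 (A : Subspace 𝕂 C(X, E))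
    (hconst : ∀ u : E, ContinuousMap.const X u ∈ A) :
    typeTwoPoints A ⊆ typeOnePoints A := by
  intro x hx K hK
  have : Nonempty X := ⟨x⟩
  obtain ⟨hKs, hKc, hKmax⟩ := hK
  -- V_{x,K} is contained in the unit sphere of A
  have hVS : Vset A x K ⊆ unitSphereOf A := fun f hf => ⟨hf.1, hf.2.1⟩
  -- V_{x,K} is convex
  have hVconv : Convex ℝ (Vset A x K) := by
    intro f hf g hg a b ha hb hab
    refine ⟨?_, ?_, ?_⟩
    · exact A.add_mem (A.smul_of_tower_mem a hf.1) (A.smul_of_tower_mem b hg.1)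
    · have hval : (a • f + b • g) x = a • f x + b • g x := by simp
      have hK' : a • f x + b • g x ∈ K := hKc hf.2.2 hg.2.2 ha hb hab
      have h1 : ‖(a • f + b • g) x‖ = 1 := by
        rw [hval]; exact mem_sphere_zero_iff_norm.mp (hKs hK')
      refine le_antisymm ?_ (h1 ▸ (a • f + b • g).norm_coe_le_norm x)
      calc ‖a • f + b • g‖ ≤ ‖a • f‖ + ‖b • g‖ := norm_add_le _ _
      _ = a * ‖f‖ + b * ‖g‖ := by
        rw [norm_smul, norm_smul, Real.norm_eq_abs, Real.norm_eq_abs,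
          abs_of_nonneg ha, abs_of_nonneg hb]
      _ = 1 := by rw [hf.2.1, hg.2.1]; linarith
    · have hval : (a • f + b • g) x = a • f x + b • g x := by simp
      rw [hval]; exact hKc hf.2.2 hg.2.2 ha hb hab
  refine ⟨hVS, hVconv, ?_⟩
  intro C' hC'S hC'conv hVC'
  rcases C'.eq_empty_or_nonempty with hCe | ⟨f₀, hf₀⟩
  · rw [hCe]; exact (subset_empty_iff.mp (hCe ▸ hVC')).symm
  -- get the aligned point y
  obtain ⟨y, hy⟩ := exists_aligned_point C' (fun f hf => (hC'S hf).2) hC'conv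
  -- the image of C' at y lies in the unit sphere and is convex
  set D : Set E := (fun f : C(X, E) => f y) '' C' with hD
  have hDs : D ⊆ sphere (0 : E) 1 := by
    rintro v ⟨f, hf, rfl⟩
    have h2 : ‖f y + f y‖ = 2 := hy f hf f hf
    rw [← two_smul ℝ (f y), norm_smul, Real.norm_eq_abs] at h2
    rw [mem_sphere_zero_iff_norm]
    rw [abs_of_nonneg (by norm_num : (0:ℝ) ≤ 2)] at h2
    linarith
  have hDc : Convex ℝ D := by
    rintro v ⟨f, hf, rfl⟩ w ⟨g, hg, rfl⟩ a b ha hb hab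
    exact ⟨a • f + b • g, hC'conv hf hg ha hb hab, by simp⟩
  obtain ⟨K', hK', hDK'⟩ := exists_maxConvexIn (sphere (0 : E) 1) D hDs hDc
  have hC'V : C' ⊆ Vset A y K' := fun f hf =>
    ⟨(hC'S hf).1, (hC'S hf).2, hDK' ⟨f, hf, rfl⟩⟩
  have hxy : x = y := hx K K' ⟨hKs, hKc, hKmax⟩ hK' y (hVC'.trans hC'V)
  subst hxy
  -- K ⊆ K'
  have hKK' : K ⊆ K' := by
    intro v hv
    have hv1 : ‖v‖ = 1 := mem_sphere_zero_iff_norm.mp (hKs hv)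
    have hcv : ContinuousMap.const X v ∈ Vset A x K :=
      ⟨hconst v, by rw [norm_const_cm, hv1], by simp [hv]⟩
    have := hC'V (hVC' hcv)
    simpa using this.2.2
  have hK'K : K' = K := hKmax K' hK'.1 hK'.2.1 hKK'
  rw [hK'K] at hC'V
  exact subset_antisymm hC'V hVC'
end
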